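/- arXiv:1102.2963 — 2 statements merged into one kernel-verified Lean document; each statement's English description precedes it below -/
import Mathlib

section
/- If a state q occurs infinitely often in a run ρ : ℕ → S (S finite), then there exist positions N < M with ρ(N) = ρ(M) = q such that every state of Inf(ρ) occurs in ρ on the interval [N, M], and moreover every state occurring in ρ[N..M] belongs to Inf(ρ). -/
/-- The infinity set of a run: states visited infinitely often. -/
def infOcc {S : Type*} (ρ : ℕ → S) : Set S := {s : S | {j : ℕ | ρ j = s}.Infinite}

/-- If q occurs infinitely often in ρ then there is a finite loop at q
(positions N < M with ρ(N) = ρ(M) = q) that visits every state of Inf(ρ)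
and visits only states of Inf(ρ). -/
theorem loop_visiting_exactly_infSet (S : Type*) [Finite S] (ρ : ℕ → S) (q : S)
    (hq : {j : ℕ | ρ j = q}.Infinite) :
    ∃ N M : ℕ, N < M ∧ ρ N = q ∧ ρ M = q ∧
      (∀ s ∈ infOcc ρ, ∃ j : ℕ, N ≤ j ∧ j ≤ M ∧ ρ j = s) ∧
      (∀ j : ℕ, N ≤ j → j ≤ M → ρ j ∈ infOcc ρ) := by
  classical
  have : Fintype S := Fintype.ofFinite S
  -- positions with state not in infOcc form a finite set
  have hbad : {j : ℕ | ρ j ∉ infOcc ρ}.Finite := by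
    have : {j : ℕ | ρ j ∉ infOcc ρ} ⊆ ⋃ s ∈ (infOcc ρ)ᶜ, {j : ℕ | ρ j = s} := by
      intro j hj
      exact Set.mem_biUnion hj rfl
    refine Set.Finite.subset (Set.Finite.biUnion (Set.toFinite _) ?_) this
    intro s hs
    exact Set.not_infinite.mp hs
  -- choose N0 beyond all bad positions
  obtain ⟨N0, hN0⟩ : ∃ N0 : ℕ, ∀ j ∈ {j : ℕ | ρ j ∉ infOcc ρ}, j < N0 := by
    rcases hbad.bddAbove with ⟨b, hb⟩
    exact ⟨b + 1, fun j hj => Nat.lt_succ_of_le (hb hj)⟩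
  have hgood : ∀ j, N0 ≤ j → ρ j ∈ infOcc ρ := by
    intro j hj
    by_contra h
    exact absurd hj (Nat.not_le.mpr (hN0 j h))
  -- pick N ≥ N0 with ρ N = q
  obtain ⟨N, hNmem, hNge⟩ := hq.exists_gt N0
  -- for each s ∈ infOcc choose a position > N
  have hchoice : ∀ s : S, ∃ j : ℕ, s ∈ infOcc ρ → (N < j ∧ ρ j = s) := by
    intro s
    by_cases hs : s ∈ infOcc ρ
    · obtain ⟨j, hj1, hj2⟩ := hs.exists_gt N
      exact ⟨j, fun _ => ⟨hj2, hj1⟩⟩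
    · exact ⟨0, fun h => absurd h hs⟩
  choose f hf using hchoice
  set K := Finset.univ.sup f with hK
  -- pick M ≥ K with ρ M = q and M > N
  obtain ⟨M, hMmem, hMgt⟩ := hq.exists_gt (max N K)
  have hMN : N < M := lt_of_le_of_lt (le_max_left _ _) hMgt
  have hMK : K ≤ M := le_of_lt (lt_of_le_of_lt (le_max_right _ _) hMgt)
  refine ⟨N, M, hMN, hNmem, hMmem, ?_, ?_⟩
  · intro s hs
    obtain ⟨hj1, hj2⟩ := hf s hs
    exact ⟨f s, le_of_lt hj1, le_trans (Finset.le_sup (Finset.mem_univ s)) hMK, hj2⟩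
  · intro j hj _
    exact hgood j (le_trans (le_of_lt hNge) hj)
end

section
/- Let ρ be an infinite concatenation of finite path segments, each drawn from a finite collection {ρ_1, ..., ρ_k}, and let k₀ be the least index such that ρ_{k₀} appears infinitely often. Suppose for each index i, segment ρ_i visits G(h[i]) and does not visit B(h[j]) for j ≤ i but visits B(h[j]) for j > i, where h is a permutation of {1,...,k}. Then Inf(ρ) ∩ G(h[k₀]) ≠ ∅ and Inf(ρ) ∩ B(h[k₀]) = ∅, i.e., ρ satisfies the Rabin pair [G(h[k₀]), B(h[k₀])] and thus violates the Streett condition ⟨G,B⟩_I. -/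
/-- An infinite concatenation of segments (segment t occupies positions
[b t, b (t+1)), with idx t the index of the segment used), where the segment
of index i visits G(h i), avoids B(h j) for j ≤ i, and visits B(h j) for
j > i.  If eventually only indices ≥ k₀ appear and index k₀ appears
infinitely often, then the run satisfies the Rabin pair
[G(h k₀), B(h k₀)] (hence violates the Streett condition). -/
theorem concatenated_run_rabin {S : Type*} [Finite S] {k : ℕ}
    (G B : Fin k → Set S) (h : Equiv.Perm (Fin k))
    (ρ : ℕ → S) (b : ℕ → ℕ) (hb : StrictMono b) (hb0 : b 0 = 0)
    (idx : ℕ → Fin k)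
    (hG : ∀ t : ℕ, ∃ m ∈ Set.Ico (b t) (b (t + 1)), ρ m ∈ G (h (idx t)))
    (hBle : ∀ t : ℕ, ∀ j : Fin k, j ≤ idx t →
      ∀ m ∈ Set.Ico (b t) (b (t + 1)), ρ m ∉ B (h j))
    (hBgt : ∀ t : ℕ, ∀ j : Fin k, idx t < j →
      ∃ m ∈ Set.Ico (b t) (b (t + 1)), ρ m ∈ B (h j))
    (k₀ : Fin k)
    (hinf : {t : ℕ | idx t = k₀}.Infinite)
    (heventually : ∃ T : ℕ, ∀ t : ℕ, T ≤ t → k₀ ≤ idx t) :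
    (infOcc ρ ∩ G (h k₀)).Nonempty ∧ infOcc ρ ∩ B (h k₀) = ∅ := by
  -- every position lies in some segment
  have hseg : ∀ n : ℕ, ∃ t, n ∈ Set.Ico (b t) (b (t + 1)) := by
    intro n
    have hne : ∃ u, n < b u := ⟨n + 1, lt_of_lt_of_le (Nat.lt_succ_self n) (hb.le_apply)⟩
    classical
    let u := Nat.find hne
    have hu : n < b u := Nat.find_spec hne
    have hu0 : u ≠ 0 := by
      intro h0
      rw [h0, hb0] at hu; omega
    refine ⟨u - 1, ?_, ?_⟩
    · by_contra hlt
      push_neg at hlt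
      exact absurd hlt (not_lt.mpr (le_of_not_gt (Nat.find_min hne (Nat.sub_lt (Nat.pos_of_ne_zero hu0) one_pos))))
    · have : u - 1 + 1 = u := Nat.succ_pred_eq_of_pos (Nat.pos_of_ne_zero hu0)
      rw [this]; exact hu
  constructor
  · -- Nonempty part
    have hMinf : {m : ℕ | ρ m ∈ G (h k₀)}.Infinite := by
      apply Set.infinite_of_forall_exists_gt
      intro a
      obtain ⟨t, ht, hta⟩ := hinf.exists_gt a
      obtain ⟨m, hm, hmg⟩ := hG t
      rw [ht] at hmg
      refine ⟨m, hmg, lt_of_lt_of_le hta (le_trans hb.le_apply hm.1)⟩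
    haveI : Infinite ↥{m : ℕ | ρ m ∈ G (h k₀)} := hMinf.to_subtype
    obtain ⟨s, hs⟩ := Finite.exists_infinite_fiber
      (fun m : {m : ℕ | ρ m ∈ G (h k₀)} => ρ m.1)
    rw [Set.infinite_coe_iff] at hs
    have himg : ((Subtype.val '' ((fun m : {m : ℕ | ρ m ∈ G (h k₀)} => ρ m.1) ⁻¹' {s})) : Set ℕ).Infinite :=
      hs.image (Subtype.val_injective.injOn)
    obtain ⟨m₀, hm₀⟩ := himg.nonempty
    obtain ⟨⟨m₀', hm₀'⟩, hfib, rfl⟩ := hm₀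
    refine ⟨s, ?_, ?_⟩
    · have : (Subtype.val '' ((fun m : {m : ℕ | ρ m ∈ G (h k₀)} => ρ m.1) ⁻¹' {s})) ⊆ {j : ℕ | ρ j = s} := by
        rintro j ⟨⟨j', hj'⟩, hjf, rfl⟩
        exact hjf
      exact Set.Infinite.mono this himg
    · have : ρ m₀' = s := hfib
      rw [← this]; exact hm₀'
  · -- Empty part
    obtain ⟨T, hT⟩ := heventually
    ext s
    simp only [Set.mem_inter_iff, Set.mem_empty_iff_false, iff_false]
    rintro ⟨hsinf, hsB⟩
    obtain ⟨j, hjs, hjT⟩ := hsinf.exists_gt (b T)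
    obtain ⟨t, hjt⟩ := hseg j
    have hTt : T ≤ t := by
      by_contra hlt
      push_neg at hlt
      have : b (t + 1) ≤ b T := hb.monotone (by omega)
      have := hjt.2
      omega
    exact hBle t k₀ (hT t hTt) j hjt (by rw [hjs]; exact hsB)
end
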